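/- Let R be a commutative ring. Every idempotent of the Laurent series ring R((t)) lies in R; equivalently, any decomposition of R((t)) into a product of two rings is induced by a decomposition R = R₁ × R₂, with the factors R₁((t)) and R₂((t)). -/

import Mathlib

/-!
Modulo a prime `p`, the image of an idempotent `f` of `R((t))` is an idempotent of the domain
`(R/p)((t))`, hence `0` or `1`. So the coefficients `fᵢ`, `i ≠ 0`, and `f₀² - f₀` are
nilpotent, and `f₀` lifts to an idempotent `e` of `R` with `f₀ - e` nilpotent. Then
`u = (f - e)²` is an idempotent all of whose coefficients are nilpotent. Split `u = v + w` with
`v` the finitely many terms of degree `≤ 0`: `v` is nilpotent and `1 - w` is a unit, so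
`u (1 - w) = u v` forces the idempotent `u` to be nilpotent, i.e. `u = 0`. Thus `f - e` is
nilpotent and `f = e`.
-/

open HahnSeries

theorem IsIdempotentElem.sub_mul_self {R : Type*} [CommRing R] {a b : R}
    (ha : IsIdempotentElem a) (hb : IsIdempotentElem b) :
    IsIdempotentElem ((a - b) * (a - b)) := by
  have hcube : (a - b) * (a - b) * (a - b) = a - b := by
    linear_combination (a + 1 - 3 * b) * ha.eq + (3 * a - b - 1) * hb.eq
  unfold IsIdempotentElem
  linear_combination (a - b) * hcube

theorem IsIdempotentElem.eq_zero_of_isNilpotent_sub {R : Type*} [CommRing R] {x w : R}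
    (hx : IsIdempotentElem x) (hxw : IsNilpotent (x - w)) (hw : IsUnit (1 - w)) : x = 0 := by
  have hmul : IsNilpotent (x * (1 - w)) := by
    rw [show x * (1 - w) = x * (x - w) by rw [mul_sub, mul_sub, hx.eq, mul_one]]
    exact Commute.isNilpotent_mul_left (.all _ _) hxw
  exact hx.eq_zero_of_isNilpotent ((hw.isNilpotent_mul_unit_of_commute_iff (.all _ _)).mp hmul)

theorem exists_isIdempotentElem_sub_isNilpotent {R : Type*} [CommRing R] {x : R}
    (hx : IsNilpotent (x * x - x)) : ∃ e, IsIdempotentElem e ∧ IsNilpotent (x - e) := by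
  let π := Ideal.Quotient.mk (nilradical R)
  have hker : ∀ y ∈ RingHom.ker π, IsNilpotent y := by
    intro y hy
    rwa [Ideal.mk_ker, mem_nilradical] at hy
  have hπx : IsIdempotentElem (π x) := by
    rw [IsIdempotentElem, ← map_mul, ← sub_eq_zero, ← map_sub, Ideal.Quotient.eq_zero_iff_mem]
    exact mem_nilradical.mpr hx
  obtain ⟨e, he, hex⟩ :=
    exists_isIdempotentElem_eq_of_ker_isNilpotent π hker _ ⟨x, rfl⟩ hπx
  refine ⟨e, he, hker _ ?_⟩
  rw [RingHom.mem_ker, map_sub, hex, sub_self]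

namespace HahnSeries

variable {Γ R : Type*}

theorem eq_sum_single_of_support_finite [PartialOrder Γ] [AddCommMonoid R] {x : R⟦Γ⟧}
    (hx : x.support.Finite) : x = ∑ i ∈ hx.toFinset, single i (x.coeff i) := by
  classical
  ext g
  by_cases hg : x.coeff g = 0 <;> simp [coeff_single, Finset.sum_ite_eq, hg]

section PartialOrder

variable [AddCommMonoid Γ] [PartialOrder Γ] [IsOrderedCancelAddMonoid Γ] [CommRing R]

theorem isNilpotent_of_support_finite {x : R⟦Γ⟧} (hx : x.support.Finite)
    (hnil : ∀ i, IsNilpotent (x.coeff i)) : IsNilpotent x := by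
  rw [eq_sum_single_of_support_finite hx]
  refine isNilpotent_sum fun i _ => ?_
  obtain ⟨n, hn⟩ := hnil i
  exact ⟨n, by rw [single_pow, hn, single_eq_zero]⟩

theorem coeff_mul_mem_of_forall_coeff_mem {I : Ideal R} {x : R⟦Γ⟧}
    (hx : ∀ i, x.coeff i ∈ I) (y : R⟦Γ⟧) (a : Γ) : (x * y).coeff a ∈ I := by
  rw [coeff_mul]
  exact I.sum_mem fun ij _ => I.mul_mem_right _ (hx ij.1)

end PartialOrder

section LinearOrder

variable [AddCommMonoid Γ] [LinearOrder Γ] [IsOrderedCancelAddMonoid Γ]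

theorem eq_C_coeff_zero_of_isIdempotentElem [Ring R] [NoZeroDivisors R] {f : R⟦Γ⟧}
    (hf : IsIdempotentElem f) : f = C (f.coeff 0) := by
  rcases IsIdempotentElem.iff_eq_zero_or_one.mp hf with rfl | rfl <;> simp

variable [CommRing R] {f : R⟦Γ⟧}

theorem isIdempotentElem_map {S : Type*} [CommRing S] (hf : IsIdempotentElem f) (φ : R →+* S) :
    IsIdempotentElem (f.map φ) := by
  have h := HahnSeries.map_mul (φ : R →ₙ+* S) (x := f) (y := f)
  rw [hf.eq] at h
  exact h.symm

theorem map_quotient_eq_C_of_isIdempotentElem (hf : IsIdempotentElem f) (p : Ideal R)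
    [p.IsPrime] : f.map (Ideal.Quotient.mk p) = C (Ideal.Quotient.mk p (f.coeff 0)) := by
  rw [eq_C_coeff_zero_of_isIdempotentElem (isIdempotentElem_map hf _), map_coeff]

theorem isNilpotent_coeff_of_isIdempotentElem (hf : IsIdempotentElem f) {i : Γ} (hi : i ≠ 0) :
    IsNilpotent (f.coeff i) := by
  refine nilpotent_iff_mem_prime.mpr fun p _ => ?_
  have h := congrArg (coeff · i) (map_quotient_eq_C_of_isIdempotentElem hf p)
  simpa [map_coeff, C_apply, coeff_single_of_ne hi, Ideal.Quotient.eq_zero_iff_mem] using h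

theorem isNilpotent_coeff_zero_mul_self_sub (hf : IsIdempotentElem f) :
    IsNilpotent (f.coeff 0 * f.coeff 0 - f.coeff 0) := by
  refine nilpotent_iff_mem_prime.mpr fun p _ => ?_
  have h := isIdempotentElem_map hf (Ideal.Quotient.mk p)
  rw [map_quotient_eq_C_of_isIdempotentElem hf p, IsIdempotentElem, ← map_mul] at h
  rw [← Ideal.Quotient.eq_zero_iff_mem, map_sub, map_mul, sub_eq_zero]
  exact C_injective h

end LinearOrder

end HahnSeries

namespace LaurentSeries

variable {R : Type*} [CommRing R]

theorem isUnit_one_sub_of_coeff_nonpos_eq_zero {w : LaurentSeries R}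
    (hw : ∀ i ≤ 0, w.coeff i = 0) : IsUnit (1 - w) := by
  refine isUnit_of_orderTop_pos ?_
  have h1 : (1 : WithTop ℤ) ≤ w.orderTop :=
    le_orderTop_iff_forall.mpr fun j hj => hw j (by norm_cast at hj; omega)
  rw [sub_sub_cancel_left, orderTop_neg]
  exact lt_of_lt_of_le (by exact_mod_cast zero_lt_one) h1

theorem finite_support_truncLT (x : LaurentSeries R) (c : ℤ) : (truncLT c x).support.Finite := by
  refine (Set.finite_Ico x.order c).subset fun i hi => ?_
  rw [support_truncLT] at hi
  exact ⟨le_of_not_gt fun h => hi.1 (coeff_eq_zero_of_lt_order h), hi.2⟩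

theorem eq_zero_of_isIdempotentElem_of_isNilpotent_coeff {x : LaurentSeries R}
    (hx : IsIdempotentElem x) (hnil : ∀ i ≤ 0, IsNilpotent (x.coeff i)) : x = 0 := by
  classical
  refine hx.eq_zero_of_isNilpotent_sub (w := x - truncLT 1 x) ?_
    (isUnit_one_sub_of_coeff_nonpos_eq_zero fun i hi => ?_)
  · rw [sub_sub_cancel]
    refine isNilpotent_of_support_finite (finite_support_truncLT x 1) fun i => ?_
    rw [HahnSeries.coeff_truncLT]
    split_ifs with h
    · exact hnil i (by omega)
    · exact IsNilpotent.zero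
  · rw [coeff_sub, HahnSeries.coeff_truncLT, if_pos (by omega), sub_self]

end LaurentSeries

theorem idempotent_laurentSeries_mem_constants
    (R : Type*) [CommRing R] (f : LaurentSeries R) (hf : f * f = f) :
    ∃ r : R, r * r = r ∧ f = HahnSeries.C r := by
  obtain ⟨e, he, hfe⟩ :=
    exists_isIdempotentElem_sub_isNilpotent (isNilpotent_coeff_zero_mul_self_sub hf)
  have hCe : IsIdempotentElem (C e : LaurentSeries R) := he.map C
  set g := f - C e
  have hg : ∀ i, g.coeff i ∈ nilradical R := by
    intro i
    rw [mem_nilradical, coeff_sub, C_apply, coeff_single]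
    split_ifs with hi
    · exact hi ▸ hfe
    · rw [sub_zero]
      exact isNilpotent_coeff_of_isIdempotentElem hf hi
  have hgg : g * g = 0 :=
    LaurentSeries.eq_zero_of_isIdempotentElem_of_isNilpotent_coeff
      (IsIdempotentElem.sub_mul_self hf hCe)
      fun i _ => mem_nilradical.mp (coeff_mul_mem_of_forall_coeff_mem hg g i)
  exact ⟨e, he, eq_of_isNilpotent_sub_of_isIdempotentElem hf hCe ⟨2, by rw [sq, hgg]⟩⟩
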